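/- With the double q-Pochhammer symbol interpreted as a formal power series, (q₁^{-2}z; q₁, q₂q₁^{-1})_∞ · (q₂^{-2}z; q₁q₂^{-1}, q₂)_∞ = (z; q₁, q₂q₁^{-1})_∞ · (z; q₁q₂^{-1}, q₂)_∞ / (1 − q₁^{-1}q₂^{-1}z). -/

import Mathlib

/-!
Write `θ = X · d/dX`. Over a field of characteristic zero, a power series with nonzero constant
term is determined by that constant term and its logarithmic derivative `θF / F`, and the recursion
defining the coefficients of `(z; p, q)_∞` says exactly that
`θ(z; p, q)_∞ / (z; p, q)_∞ = -∑_{n ≥ 1} zⁿ / ((1 - pⁿ)(1 - qⁿ))`.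
Logarithmic derivatives add under products and commute with `z ↦ cz`, so the identity reduces,
coefficient by coefficient, to an identity of rational functions in `x = q₁ⁿ`, `y = q₂ⁿ`:
`x⁻² / ((1-x)(1-y/x)) + y⁻² / ((1-x/y)(1-y)) + (xy)⁻¹ = 1 / ((1-x)(1-y/x)) + 1 / ((1-x/y)(1-y))`,
which only needs `q₁ⁿ, q₂ⁿ` to avoid `0`, `1` and each other.
-/

open scoped BigOperators

/-- Coefficients of the double q-Pochhammer symbol, viewed as a formal power series:
`(z; p, q)_∞ = exp(−∑_{n≥1} z^n / (n(1−p^n)(1−q^n)))`.  The coefficients are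
characterized by the differential recursion
`n·c_n = −∑_{k=1}^{n} c_{n−k} / ((1−p^k)(1−q^k))`, `c_0 = 1`. -/
noncomputable def dPochCoeff {K : Type*} [Field K] (p q : K) : ℕ → K
  | 0 => 1
  | n + 1 => (-(n + 1 : K)⁻¹) *
      ∑ j ∈ (Finset.range (n + 1)).attach,
        dPochCoeff p q j.1 *
          ((1 - p ^ (n + 1 - j.1)) * (1 - q ^ (n + 1 - j.1)))⁻¹
  termination_by n => n
  decreasing_by exact Finset.mem_range.mp j.2

noncomputable def dPoch {K : Type*} [Field K] (p q : K) : PowerSeries K :=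
  PowerSeries.mk (dPochCoeff p q)

abbrev RatFunc2 : Type := FractionRing (MvPolynomial (Fin 2) ℚ)

noncomputable def qv1 : RatFunc2 :=
  algebraMap (MvPolynomial (Fin 2) ℚ) RatFunc2 (MvPolynomial.X 0)

noncomputable def qv2 : RatFunc2 :=
  algebraMap (MvPolynomial (Fin 2) ℚ) RatFunc2 (MvPolynomial.X 1)

namespace PowerSeries

section CommRing

variable {R : Type*} [CommRing R]

@[simp]
theorem constantCoeff_rescale (a : R) (f : R⟦X⟧) :
    constantCoeff (rescale a f) = constantCoeff f := by
  rw [← coeff_zero_eq_constantCoeff, coeff_rescale, pow_zero, one_mul, coeff_zero_eq_constantCoeff]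

theorem X_mul_derivative_rescale (a : R) (f : R⟦X⟧) :
    X * d⁄dX R (rescale a f) = rescale a (X * d⁄dX R f) := by
  ext (_ | n)
  · simp [coeff_zero_X_mul]
  · rw [coeff_succ_X_mul, coeff_derivative, coeff_rescale, coeff_rescale, coeff_succ_X_mul,
      coeff_derivative]
    ring

theorem X_mul_derivative_rescale_of_eq (a : R) {f φ : R⟦X⟧} (hf : X * d⁄dX R f = f * φ) :
    X * d⁄dX R (rescale a f) = rescale a f * rescale a φ := by
  rw [X_mul_derivative_rescale, hf, map_mul]

theorem X_mul_derivative_mul_of_eq {f g φ ψ : R⟦X⟧} (hf : X * d⁄dX R f = f * φ)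
    (hg : X * d⁄dX R g = g * ψ) : X * d⁄dX R (f * g) = f * g * (φ + ψ) := by
  rw [Derivation.leibniz, smul_eq_mul, smul_eq_mul]
  linear_combination g * hf + f * hg

noncomputable def logDerivOneSub (u : R) : R⟦X⟧ :=
  mk fun n => if n = 0 then 0 else -u ^ n

theorem X_mul_derivative_one_sub_C_mul_X (u : R) :
    X * d⁄dX R (1 - C u * X) = (1 - C u * X) * logDerivOneSub u := by
  have hd : d⁄dX R (1 - C u * X) = -C u := by simp
  rw [hd, sub_mul, one_mul, mul_comm (C u) X, mul_assoc]
  ext (_ | _ | n)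
  · simp [logDerivOneSub]
  · simp [coeff_succ_X_mul, logDerivOneSub]
  · rw [coeff_succ_X_mul, map_sub, coeff_succ_X_mul, coeff_C_mul]
    simp [logDerivOneSub]
    ring

end CommRing

theorem eq_of_X_mul_derivative_eq {K : Type*} [Field K] [CharZero K] {f g φ : K⟦X⟧}
    (hf : X * d⁄dX K f = f * φ) (hg : X * d⁄dX K g = g * φ)
    (h0 : constantCoeff f = constantCoeff g) (hg0 : constantCoeff g ≠ 0) : f = g := by
  have hcross : d⁄dX K f * g = d⁄dX K g * f :=
    mul_left_cancel₀ X_ne_zero (by linear_combination g * hf - f * hg)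
  have hinv : g * g⁻¹ = 1 := PowerSeries.mul_inv_cancel g hg0
  have hquot : f * g⁻¹ = 1 := by
    refine derivative.ext ?_ (by simp [h0, hg0])
    rw [Derivation.leibniz, derivative_inv', derivative_one, smul_eq_mul, smul_eq_mul]
    linear_combination g⁻¹ ^ 2 * hcross - d⁄dX K f * g⁻¹ * hinv
  calc f = f * g⁻¹ * g := by rw [mul_assoc, PowerSeries.inv_mul_cancel g hg0, mul_one]
    _ = g := by rw [hquot, one_mul]

end PowerSeries

open PowerSeries

section dPoch

variable {K : Type*} [Field K]

noncomputable def dPochLogDeriv (p q : K) : K⟦X⟧ :=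
  mk fun n => if n = 0 then 0 else -((1 - p ^ n) * (1 - q ^ n))⁻¹

theorem constantCoeff_dPoch (p q : K) : constantCoeff (dPoch p q) = 1 := by
  rw [dPoch, ← coeff_zero_eq_constantCoeff, coeff_mk, dPochCoeff]

theorem succ_mul_dPochCoeff_succ [CharZero K] (p q : K) (n : ℕ) :
    (n + 1 : K) * dPochCoeff p q (n + 1) = -∑ j ∈ Finset.range (n + 1),
      dPochCoeff p q j * ((1 - p ^ (n + 1 - j)) * (1 - q ^ (n + 1 - j)))⁻¹ := by
  rw [dPochCoeff, ← mul_assoc, mul_neg, mul_inv_cancel₀ (Nat.cast_add_one_ne_zero n), neg_one_mul]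
  exact congrArg Neg.neg (Finset.sum_attach (Finset.range (n + 1)) fun j =>
    dPochCoeff p q j * ((1 - p ^ (n + 1 - j)) * (1 - q ^ (n + 1 - j)))⁻¹)

theorem X_mul_derivative_dPoch [CharZero K] (p q : K) :
    X * d⁄dX K (dPoch p q) = dPoch p q * dPochLogDeriv p q := by
  ext (_ | n)
  · simp [dPochLogDeriv]
  · rw [coeff_succ_X_mul, coeff_derivative, coeff_mul,
      Finset.Nat.sum_antidiagonal_eq_sum_range_succ_mk, Finset.sum_range_succ]
    simp only [dPoch, dPochLogDeriv, coeff_mk]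
    rw [mul_comm, succ_mul_dPochCoeff_succ, ← Finset.sum_neg_distrib, Nat.sub_self, if_pos rfl, mul_zero, add_zero]
    refine Finset.sum_congr rfl fun j hj => ?_
    rw [if_neg (by have := Finset.mem_range.mp hj; omega), mul_neg]

theorem dPochLogDeriv_shift_identity {a b : K} (ha : a ≠ 0) (hb : b ≠ 0)
    (ha1 : ∀ n ≠ 0, a ^ n ≠ 1) (hb1 : ∀ n ≠ 0, b ^ n ≠ 1) (hab : ∀ n ≠ 0, a ^ n ≠ b ^ n) :
    rescale (a⁻¹ ^ 2) (dPochLogDeriv a (b * a⁻¹)) + rescale (b⁻¹ ^ 2) (dPochLogDeriv (a * b⁻¹) b)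
      + logDerivOneSub (a⁻¹ * b⁻¹) = dPochLogDeriv a (b * a⁻¹) + dPochLogDeriv (a * b⁻¹) b := by
  ext (_ | n)
  · simp [dPochLogDeriv, logDerivOneSub]
  · simp only [map_add, coeff_rescale, dPochLogDeriv, logDerivOneSub, coeff_mk,
      if_neg n.succ_ne_zero, mul_pow, inv_pow]
    have h1 : 1 - a ^ (n + 1) ≠ 0 := sub_ne_zero.mpr (ha1 _ n.succ_ne_zero).symm
    have h2 : 1 - b ^ (n + 1) ≠ 0 := sub_ne_zero.mpr (hb1 _ n.succ_ne_zero).symm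
    have h3 : a ^ (n + 1) - b ^ (n + 1) ≠ 0 := sub_ne_zero.mpr (hab _ n.succ_ne_zero)
    have h4 : b ^ (n + 1) - a ^ (n + 1) ≠ 0 := sub_ne_zero.mpr (hab _ n.succ_ne_zero).symm
    field_simp
    ring

theorem dPoch_shift_identity [CharZero K] {a b : K} (ha : a ≠ 0) (hb : b ≠ 0)
    (ha1 : ∀ n ≠ 0, a ^ n ≠ 1) (hb1 : ∀ n ≠ 0, b ^ n ≠ 1) (hab : ∀ n ≠ 0, a ^ n ≠ b ^ n) :
    rescale (a⁻¹ ^ 2) (dPoch a (b * a⁻¹)) * rescale (b⁻¹ ^ 2) (dPoch (a * b⁻¹) b) *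
      (1 - C (a⁻¹ * b⁻¹) * X) = dPoch a (b * a⁻¹) * dPoch (a * b⁻¹) b := by
  refine eq_of_X_mul_derivative_eq ?_ (X_mul_derivative_mul_of_eq (X_mul_derivative_dPoch _ _)
    (X_mul_derivative_dPoch _ _)) (by simp [constantCoeff_dPoch]) (by simp [constantCoeff_dPoch])
  rw [← dPochLogDeriv_shift_identity ha hb ha1 hb1 hab]
  exact X_mul_derivative_mul_of_eq
    (X_mul_derivative_mul_of_eq (X_mul_derivative_rescale_of_eq _ (X_mul_derivative_dPoch _ _))
      (X_mul_derivative_rescale_of_eq _ (X_mul_derivative_dPoch _ _)))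
    (X_mul_derivative_one_sub_C_mul_X _)

end dPoch

section Generic

open MvPolynomial

theorem algebraMap_X_pow_ne_X_pow {σ R : Type*} [CommRing R] [IsDomain R] {i j : σ} {m n : ℕ}
    (h : Finsupp.single i m ≠ Finsupp.single j n) :
    algebraMap (MvPolynomial σ R) (FractionRing (MvPolynomial σ R)) (X i ^ m) ≠
      algebraMap (MvPolynomial σ R) (FractionRing (MvPolynomial σ R)) (X j ^ n) := by
  rwa [Ne, (IsFractionRing.injective _ _).eq_iff, X_pow_eq_monomial, X_pow_eq_monomial,
    monomial_left_inj one_ne_zero]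

theorem qv1_ne_zero : qv1 ≠ 0 :=
  (map_ne_zero_iff _ (IsFractionRing.injective _ _)).mpr (X_ne_zero 0)

theorem qv2_ne_zero : qv2 ≠ 0 :=
  (map_ne_zero_iff _ (IsFractionRing.injective _ _)).mpr (X_ne_zero 1)

theorem qv1_pow_ne_one {n : ℕ} (hn : n ≠ 0) : qv1 ^ n ≠ 1 := by
  simpa [qv1] using algebraMap_X_pow_ne_X_pow (R := ℚ) (i := (0 : Fin 2)) (j := 0) (n := 0)
    (by simpa using hn)

theorem qv2_pow_ne_one {n : ℕ} (hn : n ≠ 0) : qv2 ^ n ≠ 1 := by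
  simpa [qv2] using algebraMap_X_pow_ne_X_pow (R := ℚ) (i := (1 : Fin 2)) (j := 1) (n := 0)
    (by simpa using hn)

theorem qv1_pow_ne_qv2_pow {n : ℕ} (hn : n ≠ 0) : qv1 ^ n ≠ qv2 ^ n := by
  simpa [qv1, qv2] using algebraMap_X_pow_ne_X_pow (R := ℚ) (i := (0 : Fin 2)) (j := 1)
    (m := n) (n := n) (by simp [Finsupp.single_left_inj hn])

end Generic

/-- As formal power series in `z` with coefficients in the field of rational
functions in `q₁, q₂`,
`(q₁⁻²z; q₁, q₂q₁⁻¹)_∞ · (q₂⁻²z; q₁q₂⁻¹, q₂)_∞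
  = (z; q₁, q₂q₁⁻¹)_∞ · (z; q₁q₂⁻¹, q₂)_∞ / (1 − q₁⁻¹q₂⁻¹ z)`,
equivalently after multiplying by the unit `1 − q₁⁻¹q₂⁻¹ z`. -/
theorem dPoch_double_shift_identity :
    (PowerSeries.rescale (qv1⁻¹ ^ 2) (dPoch qv1 (qv2 * qv1⁻¹)) *
        PowerSeries.rescale (qv2⁻¹ ^ 2) (dPoch (qv1 * qv2⁻¹) qv2)) *
      (1 - PowerSeries.C (R := RatFunc2) (qv1⁻¹ * qv2⁻¹) * PowerSeries.X) =
      dPoch qv1 (qv2 * qv1⁻¹) * dPoch (qv1 * qv2⁻¹) qv2 :=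
  dPoch_shift_identity qv1_ne_zero qv2_ne_zero (fun _ => qv1_pow_ne_one) (fun _ => qv2_pow_ne_one)
    (fun _ => qv1_pow_ne_qv2_pow)
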